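/- arXiv:1304.3826 — 2 statements merged into one kernel-verified Lean document; each statement's English description precedes it below -/
import Mathlib

section
/- Let P > 0, M ≥ 1, channel gains g_i > 0, backhaul capacities C_i ≥ 0, and a permutation π of {1,…,M}. Define recursively β̄_0 = 0 and β_{π(i)} = (2^{C_{π(i)}} − 1)(1 + P·β̄_{i−1}) / (2^{C_{π(i)}}(1 + P·β̄_{i−1}) + P·g_{π(i)}), β̄_i = β̄_{i−1} + g_{π(i)}·β_{π(i)}. Then for every i, the Wyner–Ziv constraint holds with equality: log₂((1 + P·β̄_i)/(1 + P·β̄_{i−1})) − log₂(1 − β_{π(i)}) = C_{π(i)}. -/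
theorem cf_closed_form_tight (M : ℕ) (hM : 1 ≤ M) (P : ℝ) (hP : 0 < P)
    (g : Fin M → ℝ) (hg : ∀ i, 0 < g i)
    (C : Fin M → ℝ) (hC : ∀ i, 0 ≤ C i)
    (π : Equiv.Perm (Fin M))
    (beta : Fin M → ℝ) (b : Fin (M + 1) → ℝ)
    (hb0 : b 0 = 0)
    (hbeta : ∀ i : Fin M,
      beta (π i) = (2 ^ (C (π i)) - 1) * (1 + P * b i.castSucc) /
        (2 ^ (C (π i)) * (1 + P * b i.castSucc) + P * g (π i)))
    (hbrec : ∀ i : Fin M, b i.succ = b i.castSucc + g (π i) * beta (π i)) :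
    ∀ i : Fin M,
      Real.logb 2 ((1 + P * b i.succ) / (1 + P * b i.castSucc))
        - Real.logb 2 (1 - beta (π i)) = C (π i) := by
  have hE : ∀ i : Fin M, (1:ℝ) ≤ 2 ^ (C i) :=
    fun i => Real.one_le_rpow (by norm_num) (hC i)
  have hbetapos : ∀ i : Fin M, 0 ≤ 1 + P * b i.castSucc → 0 ≤ beta (π i) := by
    intro i hA
    rw [hbeta i]
    have hden : 0 < 2 ^ (C (π i)) * (1 + P * b i.castSucc) + P * g (π i) := by
      have := hE (π i)
      have := hg (π i)
      nlinarith
    have hnum : 0 ≤ (2 ^ (C (π i)) - 1) * (1 + P * b i.castSucc) := by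
      have := hE (π i); nlinarith
    positivity
  have hbnn : ∀ j : Fin (M + 1), 0 ≤ b j := by
    intro j
    obtain ⟨n, hn⟩ := j
    induction n with
    | zero => simp [show (⟨0, hn⟩ : Fin (M+1)) = 0 from rfl, hb0]
    | succ k ih =>
      have hk : k < M := by omega
      have hkk : k < M + 1 := by omega
      have ihk : 0 ≤ b ⟨k, hkk⟩ := ih hkk
      have hrec := hbrec ⟨k, hk⟩
      have hcs : (⟨k, hk⟩ : Fin M).castSucc = ⟨k, hkk⟩ := rfl
      have hsc : (⟨k, hk⟩ : Fin M).succ = ⟨k + 1, hn⟩ := rfl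
      rw [hsc, hcs] at hrec
      have hbp : 0 ≤ beta (π ⟨k, hk⟩) := by
        have := hbetapos ⟨k, hk⟩
        rw [hcs] at this
        exact this (by nlinarith)
      have := (hg (π ⟨k, hk⟩)).le
      rw [hrec]; nlinarith [mul_nonneg this hbp]
  intro i
  have hA : 0 < 1 + P * b i.castSucc := by
    have := hbnn i.castSucc; nlinarith
  have hE' := hE (π i)
  have hGp : 0 < P * g (π i) := mul_pos hP (hg (π i))
  have hden : 0 < 2 ^ (C (π i)) * (1 + P * b i.castSucc) + P * g (π i) := by
    nlinarith
  have h1mb : 1 - beta (π i) =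
      ((1 + P * b i.castSucc) + P * g (π i)) /
        (2 ^ (C (π i)) * (1 + P * b i.castSucc) + P * g (π i)) := by
    rw [hbeta i]; field_simp; ring
  have h1mbpos : 0 < 1 - beta (π i) := by
    rw [h1mb]; positivity
  have hsucc : 1 + P * b i.succ =
      2 ^ (C (π i)) * (1 + P * b i.castSucc) *
        ((1 + P * b i.castSucc) + P * g (π i)) /
        (2 ^ (C (π i)) * (1 + P * b i.castSucc) + P * g (π i)) := by
    rw [hbrec i, hbeta i]; field_simp; ring
  have hsuccpos : 0 < 1 + P * b i.succ := by
    rw [hsucc]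
    have h2 : (0:ℝ) < 2 ^ (C (π i)) := by linarith
    positivity
  have hratio : (1 + P * b i.succ) / (1 + P * b i.castSucc) / (1 - beta (π i))
      = 2 ^ (C (π i)) := by
    rw [hsucc, h1mb]
    field_simp
  have hxpos : 0 < (1 + P * b i.succ) / (1 + P * b i.castSucc) := div_pos hsuccpos hA
  rw [← Real.logb_div hxpos.ne' h1mbpos.ne', hratio,
    Real.logb_rpow (by norm_num) (by norm_num)]
end

section
/- Let M = 2, gains g₁, g₂ > 0, power P > 0, backhaul capacities C₁, C₂ ≥ 0. The pure-CF rate with ordering π = (1,2), R_CF = log₂(1 + P(g₁β₁ + g₂β₂)) with β₁ = (2^{C₁}−1)/(2^{C₁} + P g₁) and β₂ = (2^{C₂}−1)(1+Pg₁β₁)/(2^{C₂}(1+Pg₁β₁) + Pg₂), is strictly less than log₂(1 + P(g₁+g₂)) whenever C₁ and C₂ are finite, and R_CF ≤ C₁ + C₂. -/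
theorem two_relay_CF_bounds (g1 g2 P C1 C2 : ℝ)
    (hg1 : 0 < g1) (hg2 : 0 < g2) (hP : 0 < P) (hC1 : 0 ≤ C1) (hC2 : 0 ≤ C2)
    (β1 β2 : ℝ)
    (hβ1 : β1 = (2 ^ C1 - 1) / (2 ^ C1 + P * g1))
    (hβ2 : β2 = (2 ^ C2 - 1) * (1 + P * g1 * β1) / (2 ^ C2 * (1 + P * g1 * β1) + P * g2)) :
    Real.logb 2 (1 + P * (g1 * β1 + g2 * β2)) < Real.logb 2 (1 + P * (g1 + g2)) ∧
    Real.logb 2 (1 + P * (g1 * β1 + g2 * β2)) ≤ C1 + C2 := by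
  have ha1pos : (0:ℝ) < 2 ^ C1 := Real.rpow_pos_of_pos two_pos _
  have ha2pos : (0:ℝ) < 2 ^ C2 := Real.rpow_pos_of_pos two_pos _
  have ha1ge : (1:ℝ) ≤ 2 ^ C1 := by
    have := Real.rpow_le_rpow_of_exponent_le (one_le_two) hC1
    simpa using this
  have ha2ge : (1:ℝ) ≤ 2 ^ C2 := by
    have := Real.rpow_le_rpow_of_exponent_le (one_le_two) hC2
    simpa using this
  have hd1 : (0:ℝ) < 2 ^ C1 + P * g1 := by positivity
  have e1 : β1 * (2 ^ C1 + P * g1) = 2 ^ C1 - 1 := by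
    rw [hβ1]; field_simp
  have hβ1nn : 0 ≤ β1 := by nlinarith
  have hβ1lt : β1 < 1 := by nlinarith
  set A : ℝ := 1 + P * g1 * β1 with hA
  have hA1 : 1 ≤ A := by nlinarith [mul_nonneg (mul_nonneg hP.le hg1.le) hβ1nn]
  have hApos : 0 < A := by linarith
  have hAle : A ≤ 2 ^ C1 := by nlinarith
  have hd2 : (0:ℝ) < 2 ^ C2 * A + P * g2 := by positivity
  have e2 : β2 * (2 ^ C2 * A + P * g2) = (2 ^ C2 - 1) * A := by
    rw [hβ2]; field_simp
  have hβ2nn : 0 ≤ β2 := by nlinarith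
  have hβ2lt : β2 < 1 := by nlinarith
  have hSpos : 0 < 1 + P * (g1 * β1 + g2 * β2) := by nlinarith [mul_nonneg (mul_nonneg hP.le hg1.le) hβ1nn, mul_nonneg (mul_nonneg hP.le hg2.le) hβ2nn]
  constructor
  · apply Real.logb_lt_logb one_lt_two hSpos
    nlinarith [mul_pos (mul_pos hP hg1) (sub_pos.mpr hβ1lt),
      mul_pos (mul_pos hP hg2) (sub_pos.mpr hβ2lt)]
  · have hS2 : 1 + P * (g1 * β1 + g2 * β2) ≤ 2 ^ C2 * A := by nlinarith
    have hS3 : 1 + P * (g1 * β1 + g2 * β2) ≤ 2 ^ (C1 + C2) := by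
      rw [Real.rpow_add two_pos]
      calc 1 + P * (g1 * β1 + g2 * β2) ≤ 2 ^ C2 * A := hS2
        _ ≤ 2 ^ C1 * 2 ^ C2 := by nlinarith
    calc Real.logb 2 (1 + P * (g1 * β1 + g2 * β2))
        ≤ Real.logb 2 (2 ^ (C1 + C2)) :=
          Real.logb_le_logb_of_le one_lt_two hSpos hS3
      _ = C1 + C2 := Real.logb_rpow two_pos (by norm_num)
end
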